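/- arXiv:1507.05260 — 9 statements merged into one kernel-verified Lean document; each statement's English description precedes it below -/
import Mathlib

section
/- Let D be a diagonal unitary matrix with at least three distinct eigenvalues. Then any unitary matrix in the complex linear span of the identity matrix and D is a scalar multiple of the identity or a scalar multiple of D. -/
open Matrix ComplexConjugate

theorem Matrix.IsDiag.apply_self_mem_unitary {ι R : Type*} [Fintype ι] [DecidableEq ι]
    [CommRing R] [StarRing R] {A : Matrix ι ι R} (hA : A.IsDiag)
    (hU : A ∈ unitaryGroup ι R) (i : ι) : A i i ∈ unitary R := by
  have h := congrFun₂ (mem_unitaryGroup_iff.mp hU) i i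
  rw [← hA.diagonal_diag, star_eq_conjTranspose, diagonal_conjTranspose,
    diagonal_mul_diagonal] at h
  simpa [Unitary.mem_iff_self_mul_star] using h

theorem leadingCoeff_eq_zero_of_three_roots {K : Type*} [Field K] {c₀ c₁ c₂ x y z : K}
    (hxy : x ≠ y) (hxz : x ≠ z) (hyz : y ≠ z)
    (hx : c₂ * x ^ 2 + c₁ * x + c₀ = 0) (hy : c₂ * y ^ 2 + c₁ * y + c₀ = 0)
    (hz : c₂ * z ^ 2 + c₁ * z + c₀ = 0) : c₂ = 0 := by
  have hxy' : c₂ * (x + y) + c₁ = 0 := by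
    refine (mul_eq_zero.mp ?_).resolve_left (sub_ne_zero.mpr hxy)
    linear_combination hx - hy
  have hxz' : c₂ * (x + z) + c₁ = 0 := by
    refine (mul_eq_zero.mp ?_).resolve_left (sub_ne_zero.mpr hxz)
    linear_combination hx - hz
  refine (mul_eq_zero.mp ?_).resolve_right (sub_ne_zero.mpr hyz)
  linear_combination hxy' - hxz'

/-- Multiplying `(a + b d) conj (a + b d) = 1` by `d` and using `conj d = d⁻¹` turns it into a
quadratic equation in `d`. -/
theorem Complex.quadratic_eq_zero_of_add_mul_mem_unitary {a b d : ℂ} (hd : d ∈ unitary ℂ)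
    (hu : a + b * d ∈ unitary ℂ) :
    conj a * b * d ^ 2 + (a * conj a + b * conj b - 1) * d + a * conj b = 0 := by
  rw [Unitary.mem_iff_self_mul_star] at hd hu
  simp only [Complex.star_def, map_add, map_mul] at hd hu
  linear_combination d * hu - (a * conj b + b * conj b * d) * hd

/-- The unit circle and the circle `|a + b z| = 1` meet in at most two points unless they
coincide. -/
theorem Complex.eq_zero_or_eq_zero_of_add_mul_mem_unitary {a b d₁ d₂ d₃ : ℂ}
    (h₁₂ : d₁ ≠ d₂) (h₁₃ : d₁ ≠ d₃) (h₂₃ : d₂ ≠ d₃)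
    (hd₁ : d₁ ∈ unitary ℂ) (hd₂ : d₂ ∈ unitary ℂ) (hd₃ : d₃ ∈ unitary ℂ)
    (hu₁ : a + b * d₁ ∈ unitary ℂ) (hu₂ : a + b * d₂ ∈ unitary ℂ)
    (hu₃ : a + b * d₃ ∈ unitary ℂ) : a = 0 ∨ b = 0 := by
  have h := leadingCoeff_eq_zero_of_three_roots h₁₂ h₁₃ h₂₃
    (quadratic_eq_zero_of_add_mul_mem_unitary hd₁ hu₁)
    (quadratic_eq_zero_of_add_mul_mem_unitary hd₂ hu₂)
    (quadratic_eq_zero_of_add_mul_mem_unitary hd₃ hu₃)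
  simpa using h

theorem stmt1 {n : ℕ} (D : Matrix (Fin n) (Fin n) ℂ)
    (hdiag : D.IsDiag) (hD : D ∈ Matrix.unitaryGroup (Fin n) ℂ)
    (h3 : ∃ i j k : Fin n, D i i ≠ D j j ∧ D i i ≠ D k k ∧ D j j ≠ D k k) :
    ∀ U ∈ Submodule.span ℂ ({1, D} : Set (Matrix (Fin n) (Fin n) ℂ)),
      U ∈ Matrix.unitaryGroup (Fin n) ℂ →
        (∃ c : ℂ, U = c • (1 : Matrix (Fin n) (Fin n) ℂ)) ∨ (∃ c : ℂ, U = c • D) := by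
  intro U hspan hU
  obtain ⟨i, j, k, hij, hik, hjk⟩ := h3
  obtain ⟨a, b, rfl⟩ := Submodule.mem_span_pair.mp hspan
  have hUdiag : (a • 1 + b • D).IsDiag := (isDiag_one.smul a).add (hdiag.smul b)
  have hu (p : Fin n) : a + b * D p p ∈ unitary ℂ := by
    simpa using hUdiag.apply_self_mem_unitary hU p
  have hd := hdiag.apply_self_mem_unitary hD
  rcases Complex.eq_zero_or_eq_zero_of_add_mul_mem_unitary hij hik hjk
      (hd i) (hd j) (hd k) (hu i) (hu j) (hu k) with rfl | rfl
  · exact Or.inr ⟨b, by simp⟩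
  · exact Or.inl ⟨a, by simp⟩
end

section
/- Any real linear combination a·I₂ + b·M + c·N, where M = diag(w, w*) with |w| = 1 and N is the 2×2 matrix with rows (0, x) and (−x*, 0) with |x| = 1, is equal to a nonnegative real scalar multiple of a unitary matrix. Specifically, V·V† = (a² + b² + c² + 2ab·Re(w))·I₂. -/
/-!
With `M = diag(w, w̄)` and `N = [[0, x], [-x̄, 0]]`, both `M` and `N` are unitary, `M + M† = 2 Re(w)`,
`N + N† = 0` and `M N† + N M† = 0`. Expanding `V V†` in any star algebra with these relations leaves
only `(a² + b² + c² + 2ab Re(w)) • 1`, and this scalar is `|a + b w|² + c² ≥ 0`.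
-/

open Matrix ComplexConjugate

theorem mul_star_smul_add_smul_add_smul {R : Type*} [Ring R] [StarRing R] [Algebra ℝ R]
    [StarModule ℝ R] {M N : R} {t : ℝ} (hM : M * star M = 1) (hN : N * star N = 1)
    (hMN : M * star N + N * star M = 0) (hM_re : M + star M = t • 1) (hN_skew : N + star N = 0)
    (a b c : ℝ) :
    (a • 1 + b • M + c • N) * star (a • 1 + b • M + c • N)
      = (a ^ 2 + b ^ 2 + c ^ 2 + a * b * t) • (1 : R) := by
  simp only [star_add, star_smul, star_one, star_trivial, mul_add, add_mul, smul_mul_smul_comm,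
    one_mul, mul_one]
  linear_combination (norm := module) (a * b) • hM_re + (a * c) • hN_skew + b ^ 2 • hM
    + c ^ 2 • hN + (b * c) • hMN

theorem Complex.mul_conj_eq_one_of_norm_eq_one {z : ℂ} (hz : ‖z‖ = 1) : z * conj z = 1 := by
  rw [Complex.mul_conj', hz]
  norm_num

theorem Complex.normSq_ofReal_add_ofReal_mul {w : ℂ} (hw : ‖w‖ = 1) (a b : ℝ) :
    Complex.normSq (a + b * w) = a ^ 2 + b ^ 2 + 2 * a * b * w.re := by
  rw [Complex.normSq_add]
  simp [Complex.normSq_eq_norm_sq, hw]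
  ring

theorem diag_conj_mul_conjTranspose {w : ℂ} (hw : ‖w‖ = 1) :
    !![w, 0; 0, conj w] * !![w, 0; 0, conj w]ᴴ = 1 := by
  have hw' := Complex.mul_conj_eq_one_of_norm_eq_one hw
  ext i j; fin_cases i <;> fin_cases j <;> simp [mul_apply, mul_comm, hw']

theorem diag_conj_add_conjTranspose (w : ℂ) :
    !![w, 0; 0, conj w] + !![w, 0; 0, conj w]ᴴ = (2 * w.re) • (1 : Matrix (Fin 2) (Fin 2) ℂ) := by
  ext i j; fin_cases i <;> fin_cases j <;> simp [Complex.add_conj, add_comm]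

theorem antidiag_neg_conj_mul_conjTranspose {x : ℂ} (hx : ‖x‖ = 1) :
    !![0, x; -conj x, 0] * !![0, x; -conj x, 0]ᴴ = 1 := by
  have hx' := Complex.mul_conj_eq_one_of_norm_eq_one hx
  ext i j; fin_cases i <;> fin_cases j <;> simp [mul_apply, mul_comm, hx']

theorem antidiag_neg_conj_add_conjTranspose (x : ℂ) :
    !![0, x; -conj x, 0] + !![0, x; -conj x, 0]ᴴ = 0 := by
  ext i j; fin_cases i <;> fin_cases j <;> simp

theorem diag_conj_mul_conjTranspose_antidiag_add (w x : ℂ) :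
    !![w, 0; 0, conj w] * !![0, x; -conj x, 0]ᴴ
      + !![0, x; -conj x, 0] * !![w, 0; 0, conj w]ᴴ = 0 := by
  ext i j; fin_cases i <;> fin_cases j <;> simp [vecMul, dotProduct, mul_comm]

theorem stmt3 (a b c : ℝ) (w x : ℂ) (hw : ‖w‖ = 1) (hx : ‖x‖ = 1)
    (V : Matrix (Fin 2) (Fin 2) ℂ)
    (hV : V = (a : ℂ) • 1 + (b : ℂ) • !![w, 0; 0, (starRingEnd ℂ) w]
            + (c : ℂ) • !![0, x; -((starRingEnd ℂ) x), 0]) :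
    V * Vᴴ = (((a ^ 2 + b ^ 2 + c ^ 2 + 2 * a * b * w.re : ℝ) : ℂ)) • 1 ∧
      0 ≤ a ^ 2 + b ^ 2 + c ^ 2 + 2 * a * b * w.re := by
  subst hV
  simp only [Complex.coe_smul]
  constructor
  · rw [show 2 * a * b * w.re = a * b * (2 * w.re) by ring]
    exact mul_star_smul_add_smul_add_smul (diag_conj_mul_conjTranspose hw)
      (antidiag_neg_conj_mul_conjTranspose hx) (diag_conj_mul_conjTranspose_antidiag_add w x)
      (diag_conj_add_conjTranspose w) (antidiag_neg_conj_add_conjTranspose x) a b c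
  · linarith [Complex.normSq_nonneg (a + b * w), Complex.normSq_ofReal_add_ofReal_mul hw a b,
      sq_nonneg c]
end

section
/- Let V₁, …, V_d be d×d permutation matrices such that V₁, …, V_r are linearly independent (over ℂ) and each V_h lies in the span of V₁, …, V_r. Then the number of distinct matrices among V₁, …, V_d is at most 2^{r−1}. -/
/-!
Every row of a permutation matrix sums to `1`, so whenever `V h` is written as a linear
combination of `V₁, …, V_r` the coefficients sum to `1`: all the `V h` lie in the affine span of
`V₁, …, V_r`, whose direction has dimension at most `r - 1`. A set of `0`-`1` matrices whose
differences span a space of dimension `k` has at most `2 ^ k` elements: split it according to the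
value of an entry at which two of its members differ; the differences within each half then lie
in a proper subspace, the intersection with the kernel of that entry.
-/

/-- A `d × d` permutation matrix over `ℂ`. -/
def IsPermMatrix {d : ℕ} (M : Matrix (Fin d) (Fin d) ℂ) : Prop :=
  ∃ σ : Equiv.Perm (Fin d), ∀ i j, M i j = if i = σ j then 1 else 0

open Module Set

namespace IsPermMatrix

variable {d : ℕ} {M : Matrix (Fin d) (Fin d) ℂ}

theorem apply_eq_zero_or_one (hM : IsPermMatrix M) (i j : Fin d) : M i j = 0 ∨ M i j = 1 := by
  obtain ⟨σ, hσ⟩ := hM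
  rw [hσ]
  split_ifs <;> simp

theorem sum_row_eq_one (hM : IsPermMatrix M) (i : Fin d) : ∑ j, M i j = 1 := by
  obtain ⟨σ, hσ⟩ := hM
  simp_rw [hσ, ← Equiv.symm_apply_eq]
  simp

end IsPermMatrix

theorem mem_affineSpan_of_mem_span_of_map_eq_one {K M ι : Type*} [Ring K] [Nontrivial K]
    [AddCommGroup M] [Module K M] [Fintype ι] {p : ι → M} {x : M} (f : M →ₗ[K] K)
    (hp : ∀ i, f (p i) = 1) (hx : x ∈ Submodule.span K (range p)) (hfx : f x = 1) :
    x ∈ affineSpan K (range p) := by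
  obtain ⟨c, rfl⟩ := (Submodule.mem_span_range_iff_exists_fun K).mp hx
  have hc : ∑ i, c i = 1 := by simpa [hp] using hfx
  exact (mem_affineSpan_iff_eq_affineCombination K M).mpr
    ⟨Finset.univ, c, hc, (Finset.univ.affineCombination_eq_linear_combination p c hc).symm⟩

namespace Matrix

variable {K m n : Type*} [Field K] [Finite m] [Finite n]

theorem ncard_le_two_pow_of_finrank_vectorSpan_le {S : Set (Matrix m n K)}
    (hS : ∀ A ∈ S, ∀ i j, A i j = 0 ∨ A i j = 1) {k : ℕ} (hk : finrank K (vectorSpan K S) ≤ k) :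
    S.ncard ≤ 2 ^ k := by
  induction k generalizing S with
  | zero =>
    have hsub : S.Subsingleton :=
      (vectorSpan_eq_bot_iff_subsingleton K).mp (Submodule.finrank_eq_zero.mp (Nat.le_zero.mp hk))
    simpa using (ncard_le_one hsub.finite).mpr fun _ ha _ hb => hsub ha hb
  | succ k ih =>
    obtain hsub | ⟨A, hA, B, hB, hAB⟩ := S.subsingleton_or_nontrivial
    · exact ((ncard_le_one hsub.finite).mpr fun _ ha _ hb => hsub ha hb).trans Nat.one_le_two_pow
    obtain ⟨i, j, hij⟩ : ∃ i j, A i j ≠ B i j := by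
      by_contra! h
      exact hAB (Matrix.ext h)
    have hslice : ∀ a, (S ∩ {C | C i j = a}).ncard ≤ 2 ^ k := by
      intro a
      refine ih (fun C hC => hS C hC.1) ?_
      have hle : vectorSpan K (S ∩ {C | C i j = a}) ≤
          vectorSpan K S ⊓ LinearMap.ker (entryLinearMap K K i j) := by
        refine le_inf (vectorSpan_mono K inter_subset_left) ?_
        rw [vectorSpan_def, Submodule.span_le]
        rintro _ ⟨C, hC, D, hD, rfl⟩
        exact sub_eq_zero.mpr (hC.2.trans hD.2.symm)
      have hlt : vectorSpan K S ⊓ LinearMap.ker (entryLinearMap K K i j) < vectorSpan K S := by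
        refine inf_lt_left.mpr fun hker => hij (sub_eq_zero.mp ?_)
        simpa using hker (vsub_mem_vectorSpan K hA hB)
      have := Submodule.finrank_lt_finrank_of_lt (hle.trans_lt hlt)
      omega
    have hcover : S = S ∩ {C | C i j = 0} ∪ S ∩ {C | C i j = 1} := by
      rw [← inter_union_distrib_left]
      exact (inter_eq_left.mpr fun C hC => hS C hC i j).symm
    calc S.ncard ≤ (S ∩ {C | C i j = 0}).ncard + (S ∩ {C | C i j = 1}).ncard :=
          (congrArg ncard hcover).le.trans (ncard_union_le _ _)
      _ ≤ 2 ^ (k + 1) := by rw [pow_succ]; linarith [hslice 0, hslice 1]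

end Matrix

theorem stmt5_general {d r : ℕ} (hr : r ≤ d) (hr1 : 1 ≤ r)
    (V : Fin d → Matrix (Fin d) (Fin d) ℂ)
    (hperm : ∀ h, IsPermMatrix (V h))
    (hspan : ∀ h, V h ∈ Submodule.span ℂ
      (Set.range (fun i : Fin r => V (Fin.castLE hr i)))) :
    (Set.range V).ncard ≤ 2 ^ (r - 1) := by
  set U := fun i : Fin r => V (Fin.castLE hr i)
  let rowSum : Matrix (Fin d) (Fin d) ℂ →ₗ[ℂ] ℂ := ∑ j, Matrix.entryLinearMap ℂ ℂ ⟨0, by omega⟩ j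
  have hrowSum (h : Fin d) : rowSum (V h) = 1 := by
    simpa [rowSum] using (hperm h).sum_row_eq_one _
  have hsub : range V ⊆ affineSpan ℂ (range U) := by
    rintro _ ⟨h, rfl⟩
    exact mem_affineSpan_of_mem_span_of_map_eq_one rowSum (fun _ => hrowSum _) (hspan h) (hrowSum h)
  have hdim : finrank ℂ (vectorSpan ℂ (range V)) ≤ r - 1 :=
    calc finrank ℂ (vectorSpan ℂ (range V)) ≤ finrank ℂ (vectorSpan ℂ (range U)) :=
          Submodule.finrank_mono ((vectorSpan_mono ℂ hsub).trans (direction_affineSpan ℂ _).le)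
      _ ≤ r - 1 := finrank_vectorSpan_range_le ℂ U (by rw [Fintype.card_fin]; omega)
  exact Matrix.ncard_le_two_pow_of_finrank_vectorSpan_le
    (by rintro _ ⟨h, rfl⟩; exact (hperm h).apply_eq_zero_or_one) hdim

theorem stmt5 {d r : ℕ} (hr : r ≤ d) (hr1 : 1 ≤ r)
    (V : Fin d → Matrix (Fin d) (Fin d) ℂ)
    (hperm : ∀ h, IsPermMatrix (V h))
    (hli : LinearIndependent ℂ (fun i : Fin r => V (Fin.castLE hr i)))
    (hspan : ∀ h, V h ∈ Submodule.span ℂ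
      (Set.range (fun i : Fin r => V (Fin.castLE hr i)))) :
    (Set.range V).ncard ≤ 2 ^ (r - 1) :=
  stmt5_general hr hr1 V hperm hspan
end

section
/- If a set of permutation matrices of size d×d spans a complex vector space of dimension r, then the set contains at most 2^{r−1} distinct matrices, and this bound is tight: for every r ≥ 1 there exist 2^{r−1} distinct permutation matrices of size (2r−2)×(2r−2) spanning an r-dimensional space (for r ≥ 2). -/
/-!
Two distinct `0/1`-matrices differ in some entry `(i, j)`. Splitting `S` by the value of that entry,
the half where it is `0` lies in the kernel of the entry functional, and the half where it is `1`
lies in the kernel of "row sum minus entry" (row sums of permutation matrices are `1`); each kernel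
misses a matrix of the other half, so both halves span spaces of smaller dimension, and induction
on the dimension gives `|S| ≤ 2 ^ (r - 1)`.

For tightness, the `2 ^ m` block-diagonal matrices whose `2 × 2` blocks are `1` or the swap `X`
are the affine combinations `1 + ∑ k ∈ s, (V k - 1)` of the identity and the single-block swaps
`V k`, so they span at most `m + 1` dimensions, and by the bound itself at least `m + 1`.
-/

open Module Submodule Matrix

section FinrankSpan

variable {K V ι : Type*} [Field K] [AddCommGroup V] [Module K V]

theorem finrank_span_lt_of_subset_ker {S T : Set V} (hS : S.Finite) (hTS : T ⊆ S)
    {ψ : V →ₗ[K] K} (hT : T ⊆ LinearMap.ker ψ) {B : V} (hB : B ∈ S) (hψB : ψ B ≠ 0) :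
    finrank K (span K T) < finrank K (span K S) := by
  have := FiniteDimensional.span_of_finite K hS
  exact Submodule.finrank_lt_finrank_of_lt <| SetLike.lt_iff_le_and_exists.2
    ⟨span_mono hTS, B, subset_span hB, fun hBT => hψB (span_le.2 hT hBT)⟩

theorem finrank_span_range_add_sum_le [Fintype ι] (v : V) (w : ι → V) :
    finrank K (span K (Set.range fun s : Finset ι => v + ∑ k ∈ s, w k)) ≤ Fintype.card ι + 1 := by
  have hle : span K (Set.range fun s : Finset ι => v + ∑ k ∈ s, w k) ≤
      span K (Set.range (Option.elim' v w)) := by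
    rw [span_le]
    rintro _ ⟨s, rfl⟩
    exact add_mem (subset_span ⟨none, rfl⟩) (sum_mem fun k _ => subset_span ⟨some k, rfl⟩)
  have := FiniteDimensional.span_of_finite K (Set.finite_range (Option.elim' v w))
  calc _ ≤ finrank K (span K (Set.range (Option.elim' v w))) := Submodule.finrank_mono hle
    _ ≤ Fintype.card (Option ι) := finrank_range_le_card _
    _ = Fintype.card ι + 1 := Fintype.card_option

variable (ℓ : ι → V →ₗ[K] K) {S : Set V}

theorem exists_apply_eq_zero_and_apply_eq_one (h01 : ∀ A ∈ S, ∀ i, ℓ i A = 0 ∨ ℓ i A = 1)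
    (hsep : ∀ A ∈ S, ∀ B ∈ S, (∀ i, ℓ i A = ℓ i B) → A = B) {M N : V} (hM : M ∈ S) (hN : N ∈ S)
    (hMN : M ≠ N) : ∃ i, ∃ A₀ ∈ S, ∃ A₁ ∈ S, ℓ i A₀ = 0 ∧ ℓ i A₁ = 1 := by
  obtain ⟨i, hi⟩ : ∃ i, ℓ i M ≠ ℓ i N := by
    by_contra! h
    exact hMN (hsep M hM N hN h)
  refine ⟨i, ?_⟩
  rcases h01 M hM i with h | h <;> rcases h01 N hN i with h' | h'
  · exact absurd (h.trans h'.symm) hi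
  · exact ⟨M, hM, N, hN, h, h'⟩
  · exact ⟨N, hN, M, hM, h', h⟩
  · exact absurd (h.trans h'.symm) hi

theorem ncard_le_two_pow_finrank_span_sub_one (φ : V →ₗ[K] K)
    (h01 : ∀ A ∈ S, ∀ i, ℓ i A = 0 ∨ ℓ i A = 1)
    (hsep : ∀ A ∈ S, ∀ B ∈ S, (∀ i, ℓ i A = ℓ i B) → A = B)
    (hφ : ∀ A ∈ S, φ A = 1) :
    S.ncard ≤ 2 ^ (finrank K (span K S) - 1) := by
  induction hn : finrank K (span K S) using Nat.strong_induction_on generalizing S with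
  | _ n IH =>
  obtain hinf | hfin := S.infinite_or_finite
  · simp [hinf.ncard]
  rcases le_or_gt S.ncard 1 with hle | hlt
  · exact hle.trans Nat.one_le_two_pow
  obtain ⟨M, hM, N, hN, hMN⟩ := (Set.one_lt_ncard hfin).1 hlt
  obtain ⟨i, A₀, hA₀, A₁, hA₁, h₀, h₁⟩ :=
    exists_apply_eq_zero_and_apply_eq_one ℓ h01 hsep hM hN hMN
  set S₀ := S ∩ LinearMap.ker (ℓ i)
  set S₁ := S \ LinearMap.ker (ℓ i)
  have hn₀ : finrank K (span K S₀) < n := hn ▸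
    finrank_span_lt_of_subset_ker hfin Set.inter_subset_left Set.inter_subset_right hA₁
      (by simp [h₁])
  have hn₁ : finrank K (span K S₁) < n := by
    refine hn ▸ finrank_span_lt_of_subset_ker hfin Set.sdiff_subset (ψ := φ - ℓ i)
      (fun A hA => ?_) hA₀ (by simp [hφ A₀ hA₀, h₀])
    have h₁A : ℓ i A = 1 := (h01 A hA.1 i).resolve_left hA.2
    simp [hφ A hA.1, h₁A]
  have hpos : 0 < finrank K (span K S₀) := by
    have := finrank_span_lt_of_subset_ker (hfin.subset Set.inter_subset_left)
      (Set.empty_subset S₀) (Set.empty_subset _) ⟨hA₀, h₀⟩ (by simp [hφ A₀ hA₀] : φ A₀ ≠ 0)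
    rwa [span_empty, finrank_bot] at this
  have hhalf : ∀ T ⊆ S, finrank K (span K T) < n → T.ncard ≤ 2 ^ (n - 2) := fun T hT hTn =>
    (IH _ hTn (fun A hA => h01 A (hT hA)) (fun A hA B hB => hsep A (hT hA) B (hT hB))
      (fun A hA => hφ A (hT hA)) rfl).trans (Nat.pow_le_pow_right two_pos (by omega))
  calc S.ncard = S₀.ncard + S₁.ncard := (Set.ncard_inter_add_ncard_sdiff_eq_ncard S _ hfin).symm
    _ ≤ 2 ^ (n - 2) + 2 ^ (n - 2) :=
      add_le_add (hhalf _ Set.inter_subset_left hn₀) (hhalf _ Set.sdiff_subset hn₁)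
    _ = 2 ^ (n - 1) := by
      rw [← two_mul, ← pow_succ']
      congr 1
      omega

end FinrankSpan

section PermMatrix

variable {R n o : Type*} [DecidableEq n] [DecidableEq o]

theorem Equiv.Perm.permMatrix_injective [Zero R] [One R] [NeZero (1 : R)] :
    Function.Injective fun σ : Equiv.Perm n => σ.permMatrix R := by
  intro σ τ h
  ext i
  simpa [eq_comm] using congrFun (congrFun h i) (σ i)

theorem blockDiagonal_permMatrix [Zero R] [One R] (e : o → Equiv.Perm n) :
    blockDiagonal (fun k => (e k).permMatrix R) =
      Equiv.Perm.permMatrix R (Equiv.prodCongrLeft e) := by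
  ext ⟨i, k⟩ ⟨j, l⟩
  by_cases hkl : k = l
  · subst hkl
    simp
  · simp [blockDiagonal_apply_ne _ _ _ hkl, hkl]

theorem isPermMatrix_reindex_permMatrix {d : ℕ} (e : n ≃ Fin d) (σ : Equiv.Perm n) :
    IsPermMatrix (reindex e e (σ.permMatrix ℂ)) := by
  refine ⟨e.permCongr σ⁻¹, fun i j => ?_⟩
  obtain ⟨x, rfl⟩ := e.surjective i
  obtain ⟨y, rfl⟩ := e.surjective j
  simp [Equiv.permCongr_apply, Equiv.eq_symm_apply, eq_comm]

def blockSwap (s : Finset o) : Equiv.Perm (Fin 2 × o) :=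
  Equiv.prodCongrLeft fun k => if k ∈ s then Equiv.swap 0 1 else 1

theorem blockSwap_injective : Function.Injective (blockSwap (o := o)) := by
  intro s t h
  ext k
  have := congrArg (fun σ : Equiv.Perm _ => (σ (0, k)).1) h
  by_cases hs : k ∈ s <;> by_cases ht : k ∈ t <;> simp [blockSwap, hs, ht] at this ⊢

theorem permMatrix_blockSwap [Ring R] (s : Finset o) :
    (blockSwap s).permMatrix R =
      1 + ∑ k ∈ s, blockDiagonal (Pi.single k ((Equiv.swap (0 : Fin 2) 1).permMatrix R - 1)) := by
  have hblocks :
      (fun k => Equiv.Perm.permMatrix R (if k ∈ s then Equiv.swap (0 : Fin 2) 1 else 1)) =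
        1 + ∑ k ∈ s, Pi.single k ((Equiv.swap (0 : Fin 2) 1).permMatrix R - 1) := by
    ext1 k
    simp only [Pi.add_apply, Finset.sum_apply, Pi.single_apply, Finset.sum_ite_eq, Pi.one_apply]
    split_ifs <;> simp
  rw [blockSwap, ← blockDiagonal_permMatrix, hblocks, blockDiagonal_add, blockDiagonal_one]
  exact congrArg _ (map_sum (blockDiagonalAddMonoidHom (Fin 2) (Fin 2) o R) _ s)

end PermMatrix

theorem IsPermMatrix.apply_eq_zero_or_one_s6 {d : ℕ} {M : Matrix (Fin d) (Fin d) ℂ}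
    (hM : IsPermMatrix M) (i j : Fin d) : M i j = 0 ∨ M i j = 1 := by
  obtain ⟨σ, hσ⟩ := hM
  rw [hσ]
  split_ifs <;> simp

theorem IsPermMatrix.sum_row {d : ℕ} {M : Matrix (Fin d) (Fin d) ℂ} (hM : IsPermMatrix M)
    (i : Fin d) : ∑ j, M i j = 1 := by
  obtain ⟨σ, hσ⟩ := hM
  simp only [hσ]
  rw [← Equiv.sum_comp σ.symm]
  simp

theorem ncard_le_two_pow_of_isPermMatrix {d : ℕ} {S : Set (Matrix (Fin d) (Fin d) ℂ)}
    (hS : ∀ M ∈ S, IsPermMatrix M) : S.ncard ≤ 2 ^ (finrank ℂ (span ℂ S) - 1) := by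
  cases d with
  | zero => exact (Set.ncard_le_one_of_subsingleton S).trans Nat.one_le_two_pow
  | succ d =>
    refine ncard_le_two_pow_finrank_span_sub_one (fun p : Fin (d + 1) × Fin (d + 1) =>
      entryLinearMap ℂ ℂ p.1 p.2) (∑ j, entryLinearMap ℂ ℂ 0 j)
      (fun M hM p => (hS M hM).apply_eq_zero_or_one_s6 p.1 p.2)
      (fun M _ N _ h => Matrix.ext fun i j => h (i, j)) fun M hM => ?_
    simpa using (hS M hM).sum_row 0

theorem exists_isPermMatrix_ncard_eq_two_pow_finrank_le {m d : ℕ} (e : Fin 2 × Fin m ≃ Fin d) :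
    ∃ S : Set (Matrix (Fin d) (Fin d) ℂ), (∀ M ∈ S, IsPermMatrix M) ∧ S.ncard = 2 ^ m ∧
      finrank ℂ (span ℂ S) ≤ m + 1 := by
  let L := reindexLinearEquiv ℂ ℂ e e
  let P : Finset (Fin m) → Matrix (Fin d) (Fin d) ℂ := fun s => L ((blockSwap s).permMatrix ℂ)
  have hP : P = fun s => L 1 + ∑ k ∈ s,
      L (blockDiagonal (Pi.single k ((Equiv.swap (0 : Fin 2) 1).permMatrix ℂ - 1))) := by
    ext1 s
    simp only [P, permMatrix_blockSwap, map_add, map_sum]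
  refine ⟨Set.range P, ?_, ?_, ?_⟩
  · rintro _ ⟨s, rfl⟩
    exact isPermMatrix_reindex_permMatrix e _
  · have hinj : Function.Injective P :=
      L.injective.comp (Equiv.Perm.permMatrix_injective.comp blockSwap_injective)
    rw [Set.ncard_range_of_injective hinj]
    simp
  · rw [hP]
    exact (finrank_span_range_add_sum_le (L 1) _).trans_eq (by rw [Fintype.card_fin])

theorem stmt6 :
    (∀ (d r : ℕ) (S : Set (Matrix (Fin d) (Fin d) ℂ)),
      (∀ M ∈ S, IsPermMatrix M) →
      Module.finrank ℂ ↥(Submodule.span ℂ S) = r →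
      S.ncard ≤ 2 ^ (r - 1)) ∧
    (∀ r : ℕ, 2 ≤ r →
      ∃ S : Set (Matrix (Fin (2 * r - 2)) (Fin (2 * r - 2)) ℂ),
        (∀ M ∈ S, IsPermMatrix M) ∧ S.ncard = 2 ^ (r - 1) ∧
        Module.finrank ℂ ↥(Submodule.span ℂ S) = r) := by
  refine ⟨fun d r S hS hr => hr ▸ ncard_le_two_pow_of_isPermMatrix hS, fun r hr => ?_⟩
  obtain ⟨S, hS, hcard, hle⟩ := exists_isPermMatrix_ncard_eq_two_pow_finrank_le
    (finProdFinEquiv.trans (finCongr (by omega : 2 * (r - 1) = 2 * r - 2)))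
  have hge := ncard_le_two_pow_of_isPermMatrix hS
  rw [hcard, Nat.pow_le_pow_iff_right (by norm_num)] at hge
  exact ⟨S, hS, hcard, by omega⟩
end

section
/- Let W be an r-dimensional subspace of d×d complex matrices spanned by r linearly independent partial permutation matrices. Then the number of nonzero partial permutation matrices contained in W is at most 2^r − 1. -/
/-! A subspace `V` of dimension `k` has `k` pivot coordinates, on which every nonzero vector of `V`
is nonzero: the coordinate functionals restricted to `V` span its dual, so a basis of the dual can be
chosen among them. A 0-1 vector of `V` is then determined by the set of pivots where it equals `1`,
and this set is nonempty unless the vector is zero, which leaves at most `2 ^ k - 1` possibilities.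
Matrices in the span of `r` matrices form such a subspace with `k ≤ r`. -/

/-- A `d × d` partial permutation matrix over `ℂ`: a 0-1 matrix in which every row
and every column contains at most one nonzero entry. -/
def IsPartialPermMatrix {d : ℕ} (M : Matrix (Fin d) (Fin d) ℂ) : Prop :=
  (∀ i j, M i j = 0 ∨ M i j = 1) ∧
  (∀ i j j', M i j ≠ 0 → M i j' ≠ 0 → j = j') ∧
  (∀ i i' j, M i j ≠ 0 → M i' j ≠ 0 → i = i')

section PivotCoordinates

variable {K M ι : Type*} [Field K] [AddCommGroup M] [Module K M]
  (V : Submodule K M) (φ : ι → Module.Dual K M)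

theorem span_range_domRestrict_eq_top (hφ : ∀ v ∈ V, (∀ i, φ i v = 0) → v = 0)
    [FiniteDimensional K V] :
    Submodule.span K (Set.range fun i => (φ i).domRestrict V) = ⊤ := by
  refine Submodule.span_eq_top_of_ne_zero fun v hv => ?_
  by_contra! h
  exact hv (Subtype.ext (hφ v v.2 fun i => h _ ⟨i, rfl⟩))

theorem exists_pivot_coordinates (hφ : ∀ v ∈ V, (∀ i, φ i v = 0) → v = 0)
    [FiniteDimensional K V] :
    ∃ a : Fin (Module.finrank K V) → ι, ∀ v ∈ V, (∀ k, φ (a k) v = 0) → v = 0 := by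
  obtain ⟨b, hb_range, hb_span, hb_li⟩ :=
    exists_linearIndependent K (Set.range fun i => (φ i).domRestrict V)
  rw [span_range_domRestrict_eq_top V φ hφ] at hb_span
  let B : Module.Basis b K (Module.Dual K V) := .mk hb_li (by simp [hb_span])
  let e := B.indexEquiv (Module.finBasisOfFinrankEq K (Module.Dual K V) Subspace.dual_finrank_eq)
  choose a ha using fun k => hb_range (e.symm k).2
  refine ⟨a, fun v hv hv0 => ?_⟩
  have heval : Module.Dual.eval K V ⟨v, hv⟩ = 0 := B.ext fun j => by
    rw [show B j = j.1 from Module.Basis.mk_apply _ _ _, ← e.symm_apply_apply j, ← ha]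
    exact hv0 (e j)
  exact congrArg Subtype.val ((Module.eval_apply_eq_zero_iff K _).mp heval)

theorem ncard_le_two_pow_finrank_sub_one (hφ : ∀ v ∈ V, (∀ i, φ i v = 0) → v = 0)
    [FiniteDimensional K V] {S : Set M} (hSV : S ⊆ V) (hS0 : 0 ∉ S)
    (hS01 : ∀ v ∈ S, ∀ i, φ i v = 0 ∨ φ i v = 1) :
    S.ncard ≤ 2 ^ Module.finrank K V - 1 := by
  classical
  obtain ⟨a, ha⟩ := exists_pivot_coordinates V φ hφ
  let support (v : M) : Finset (Fin (Module.finrank K V)) := {k | φ (a k) v = 1}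
  let nonemptySets : Finset (Finset (Fin (Module.finrank K V))) := Finset.univ.erase ∅
  have hmaps : ∀ v ∈ S, support v ∈ (nonemptySets : Set _) := by
    intro v hv
    refine Finset.mem_erase.mpr ⟨fun hempty => hS0 ?_, Finset.mem_univ _⟩
    have hv0 : v = 0 := ha v (hSV hv) fun k => (hS01 v hv _).resolve_right fun h1 => by
      simpa [support, h1] using congrArg (k ∈ ·) hempty
    exact hv0 ▸ hv
  have hinj : Set.InjOn support S := by
    intro v hv w hw hvw
    refine sub_eq_zero.mp (ha _ (V.sub_mem (hSV hv) (hSV hw)) fun k => ?_)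
    have hk : φ (a k) v = 1 ↔ φ (a k) w = 1 := by simpa [support] using congrArg (k ∈ ·) hvw
    rw [map_sub, sub_eq_zero]
    rcases hS01 v hv (a k) with h | h <;> rcases hS01 w hw (a k) with h' | h' <;> simp_all
  refine (Set.ncard_le_ncard_of_injOn support hmaps hinj).trans_eq ?_
  rw [Set.ncard_coe_finset, Finset.card_erase_of_mem (Finset.mem_univ _), Finset.card_univ,
    Fintype.card_finset, Fintype.card_fin]

end PivotCoordinates

theorem stmt7_general {d r : ℕ} (P : Fin r → Matrix (Fin d) (Fin d) ℂ) :
    {M | M ∈ Submodule.span ℂ (Set.range P) ∧ IsPartialPermMatrix M ∧ M ≠ 0}.ncard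
      ≤ 2 ^ r - 1 := by
  let entry (ij : Fin d × Fin d) : Module.Dual ℂ (Matrix (Fin d) (Fin d) ℂ) :=
    Matrix.entryLinearMap ℂ ℂ ij.1 ij.2
  have hentry : ∀ M ∈ Submodule.span ℂ (Set.range P), (∀ ij, entry ij M = 0) → M = 0 :=
    fun M _ hM => Matrix.ext fun i j => hM (i, j)
  have hcount := ncard_le_two_pow_finrank_sub_one _ entry hentry
    (S := {M | M ∈ Submodule.span ℂ (Set.range P) ∧ IsPartialPermMatrix M ∧ M ≠ 0})
    (fun M hM => hM.1) (fun h => h.2.2 rfl) (fun M hM ij => hM.2.1.1 ij.1 ij.2)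
  have hrank : Module.finrank ℂ (Submodule.span ℂ (Set.range P)) ≤ r :=
    (finrank_range_le_card P).trans_eq (Fintype.card_fin r)
  exact hcount.trans (Nat.sub_le_sub_right (Nat.pow_le_pow_right two_pos hrank) 1)

theorem stmt7 {d r : ℕ} (P : Fin r → Matrix (Fin d) (Fin d) ℂ)
    (hpp : ∀ i, IsPartialPermMatrix (P i))
    (hli : LinearIndependent ℂ P) :
    {M | M ∈ Submodule.span ℂ (Set.range P) ∧ IsPartialPermMatrix M ∧ M ≠ 0}.ncard
      ≤ 2 ^ r - 1 :=
  stmt7_general P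
end

section
/- Let S be a set of nonzero d×d partial permutation matrices spanning a complex vector space of dimension exactly r, such that every column index 1 ≤ c ≤ d is occupied by some matrix in S (i.e., some matrix in S has a nonzero entry in column c). Then the number of covering subsets of S is at most B_{r+1}, the (r+1)-st Bell number. -/
/-- `M` occupies column `c` if it has a nonzero entry in column `c`. -/
def Occupies {d : ℕ} (M : Matrix (Fin d) (Fin d) ℂ) (c : Fin d) : Prop :=
  ∃ i, M i c ≠ 0

/-- `S'` is a covering subset of `S`: `S' ⊆ S`, no two matrices of `S'` occupy a
common column, and every column is occupied by some matrix in `S'`. -/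
def IsCoveringSubset {d : ℕ} (S S' : Set (Matrix (Fin d) (Fin d) ℂ)) : Prop :=
  S' ⊆ S ∧
  (∀ M ∈ S', ∀ N ∈ S', M ≠ N → ∀ c, ¬(Occupies M c ∧ Occupies N c)) ∧
  (∀ c, ∃ M ∈ S', Occupies M c)

/-- The `n`-th Bell number: the number of equivalence relations (partitions)
on a set with `n` elements. -/
noncomputable def bell (n : ℕ) : ℕ := Nat.card (Setoid (Fin n))


/-!
Linear algebra gives a set `K` of at most `r` positions such that a matrix of the span of `S`
vanishing on `K` is zero. Hence a 0-1 matrix of `S` is determined by the set of positions of `K`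
where it is nonzero, and this set is nonempty. In a covering subset the matrices occupy disjoint
columns, so these sets are pairwise disjoint: they form a partition of part of `K`. Adding one
extra point and putting it in a block with the unused positions turns such a partial partition
into a partition of a set with `|K| + 1 ≤ r + 1` elements, injectively.
-/

instance Setoid.instFinite {α : Type*} [Finite α] : Finite (Setoid α) :=
  Finite.of_injective (fun s : Setoid α => ⇑s) fun _ _ h =>
    Setoid.ext fun a b => iff_of_eq (congrFun (congrFun h a) b)

theorem Setoid.card_le_card_of_embedding {α β : Type*} [Finite β] (e : α ↪ β) :
    Nat.card (Setoid α) ≤ Nat.card (Setoid β) :=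
  Nat.card_le_card_of_surjective _ (Setoid.comap_surjective e e.injective)

theorem Submodule.exists_finset_card_le_finrank_eq_zero_of_forall_eq_zero {K M ι : Type*}
    [Field K] [AddCommGroup M] [Module K M] (φ : ι → M →ₗ[K] K)
    (hφ : ∀ m, (∀ i, φ i m = 0) → m = 0) (W : Submodule K M) [FiniteDimensional K W] :
    ∃ s : Finset ι, s.card ≤ Module.finrank K W ∧ ∀ f ∈ W, (∀ i ∈ s, φ i f = 0) → f = 0 := by
  classical
  induction hn : Module.finrank K W using Nat.strong_induction_on generalizing W with
  | _ n ih =>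
  by_cases hW : ∀ f ∈ W, f = 0
  · exact ⟨∅, Nat.zero_le _, fun f hf _ => hW f hf⟩
  push Not at hW
  obtain ⟨f, hfW, hf⟩ := hW
  obtain ⟨i, hi⟩ : ∃ i, φ i f ≠ 0 := by
    by_contra! h
    exact hf (hφ f h)
  have hlt : W ⊓ LinearMap.ker (φ i) < W :=
    inf_le_left.lt_of_ne fun h => hi (h.ge hfW).2
  have hrank_lt := Submodule.finrank_lt_finrank_of_lt hlt
  obtain ⟨s, hs_card, hs⟩ := ih _ (hn ▸ hrank_lt) _ rfl
  refine ⟨insert i s, (Finset.card_insert_le _ _).trans (by omega), fun g hg hg0 => ?_⟩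
  exact hs g ⟨hg, hg0 i (s.mem_insert_self i)⟩ fun j hj => hg0 j (Finset.mem_insert_of_mem hj)

section PartialPartition

variable {α : Type*}

def IsPartialPartition (F : Set (Set α)) : Prop :=
  ∅ ∉ F ∧ F.PairwiseDisjoint id

/-- The partition of `Option α` into the blocks of `F` and the rest, which contains `none`. -/
def IsPartialPartition.toSetoid (F : Set (Set α)) : Setoid (Option α) :=
  Setoid.ker fun x => x.elim ∅ fun a => {A ∈ F | a ∈ A}

variable {F : Set (Set α)} {A : Set α} {a : α}

theorem IsPartialPartition.setOf_toSetoid_eq (hF : IsPartialPartition F) (hA : A ∈ F)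
    (ha : a ∈ A) : {b | toSetoid F (some a) (some b)} = A := by
  have blocks_eq {B : Set α} {b : α} (hB : B ∈ F) (hb : b ∈ B) : {C ∈ F | b ∈ C} = {B} :=
    Set.eq_singleton_iff_unique_mem.2 ⟨⟨hB, hb⟩, fun C ⟨hC, hbC⟩ =>
      hF.2.elim hC hB (Set.not_disjoint_iff.2 ⟨b, hbC, hb⟩)⟩
  ext b
  change {C ∈ F | a ∈ C} = {C ∈ F | b ∈ C} ↔ b ∈ A
  rw [blocks_eq hA ha]
  exact ⟨fun h => (h.subset (Set.mem_singleton A)).2, fun hb => (blocks_eq hA hb).symm⟩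

theorem IsPartialPartition.mem_iff (hF : IsPartialPartition F) :
    A ∈ F ↔ ∃ a, ¬ toSetoid F none (some a) ∧ A = {b | toSetoid F (some a) (some b)} := by
  constructor
  · intro hA
    obtain ⟨a, ha⟩ := Set.nonempty_iff_ne_empty.2 (ne_of_mem_of_not_mem hA hF.1)
    refine ⟨a, fun h => ?_, (hF.setOf_toSetoid_eq hA ha).symm⟩
    change ∅ = {C ∈ F | a ∈ C} at h
    exact Set.eq_empty_iff_forall_notMem.1 h.symm A ⟨hA, ha⟩
  · rintro ⟨a, ha, rfl⟩
    obtain ⟨B, hB, haB⟩ : ∃ B ∈ F, a ∈ B := by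
      by_contra! h
      exact ha (Set.eq_empty_iff_forall_notMem.2 fun B hB => h B hB.1 hB.2).symm
    rwa [hF.setOf_toSetoid_eq hB haB]

theorem IsPartialPartition.toSetoid_injOn :
    {F : Set (Set α) | IsPartialPartition F}.InjOn IsPartialPartition.toSetoid :=
  fun F hF G hG h => Set.ext fun A => by rw [hF.mem_iff, hG.mem_iff, h]

theorem ncard_setOf_isPartialPartition_le [Finite α] :
    {F : Set (Set α) | IsPartialPartition F}.ncard ≤ Nat.card (Setoid (Option α)) := by
  rw [← Set.ncard_univ]
  exact Set.ncard_le_ncard_of_injOn _ (fun _ _ => Set.mem_univ _)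
    IsPartialPartition.toSetoid_injOn Set.finite_univ

end PartialPartition

section KeySupport

variable {m n R : Type*} [Ring R] {S : Set (Matrix m n R)} {K : Finset (m × n)}

def keySupport (K : Finset (m × n)) (N : Matrix m n R) : Set K :=
  {p | N p.1.1 p.1.2 ≠ 0}

theorem keySupport_injOn (h01 : ∀ N ∈ S, ∀ i j, N i j = 0 ∨ N i j = 1)
    (hK : ∀ A ∈ Submodule.span R S, (∀ p ∈ K, A p.1 p.2 = 0) → A = 0) :
    S.InjOn (keySupport K) := by
  intro M hM N hN h
  rw [← sub_eq_zero]
  refine hK _ (sub_mem (Submodule.subset_span hM) (Submodule.subset_span hN)) fun p hp => ?_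
  have hMN : M p.1 p.2 ≠ 0 ↔ N p.1 p.2 ≠ 0 := Set.ext_iff.1 h ⟨p, hp⟩
  rcases h01 M hM p.1 p.2 with hM | hM <;> rcases h01 N hN p.1 p.2 with hN | hN <;>
    simp_all

theorem keySupport_nonempty (hK : ∀ A ∈ Submodule.span R S, (∀ p ∈ K, A p.1 p.2 = 0) → A = 0)
    {N : Matrix m n R} (hN : N ∈ S) (hN0 : N ≠ 0) : (keySupport K N).Nonempty := by
  by_contra! h
  exact hN0 <| hK N (Submodule.subset_span hN) fun p hp => by
    by_contra hp0
    exact Set.eq_empty_iff_forall_notMem.1 h ⟨p, hp⟩ hp0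

end KeySupport

theorem IsCoveringSubset.isPartialPartition_image_keySupport {d : ℕ}
    {S S' : Set (Matrix (Fin d) (Fin d) ℂ)} {K : Finset (Fin d × Fin d)}
    (hS' : IsCoveringSubset S S') (hne : ∀ N ∈ S, (keySupport K N).Nonempty) :
    IsPartialPartition (keySupport K '' S') := by
  refine ⟨fun ⟨N, hN, h⟩ => (hne N (hS'.1 hN)).ne_empty h, ?_⟩
  rintro _ ⟨M, hM, rfl⟩ _ ⟨N, hN, rfl⟩ hMN
  refine Set.disjoint_left.2 fun p hpM hpN => ?_
  exact hS'.2.1 M hM N hN (fun h => hMN (congrArg _ h)) p.1.2 ⟨⟨_, hpM⟩, ⟨_, hpN⟩⟩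

theorem stmt9_general {d r : ℕ} (S : Set (Matrix (Fin d) (Fin d) ℂ))
    (hpp : ∀ M ∈ S, IsPartialPermMatrix M ∧ M ≠ 0)
    (hrank : Module.finrank ℂ ↥(Submodule.span ℂ S) = r) :
    {S' : Set (Matrix (Fin d) (Fin d) ℂ) | IsCoveringSubset S S'}.ncard
      ≤ bell (r + 1) := by
  classical
  obtain ⟨K, hK_card, hK⟩ :=
    (Submodule.span ℂ S).exists_finset_card_le_finrank_eq_zero_of_forall_eq_zero
      (fun p : Fin d × Fin d => Matrix.entryLinearMap ℂ ℂ p.1 p.2)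
      (fun A hA => Matrix.ext fun i j => hA (i, j))
  have hinj : S.InjOn (keySupport K) := keySupport_injOn (fun N hN => (hpp N hN).1.1) hK
  have hne : ∀ N ∈ S, (keySupport K N).Nonempty :=
    fun N hN => keySupport_nonempty hK hN (hpp N hN).2
  obtain ⟨e⟩ : Nonempty (Option K ↪ Fin (r + 1)) :=
    Function.Embedding.nonempty_of_card_le (by rw [Fintype.card_option, Fintype.card_coe, Fintype.card_fin]; omega)
  calc {S' : Set (Matrix (Fin d) (Fin d) ℂ) | IsCoveringSubset S S'}.ncard
      ≤ {F : Set (Set K) | IsPartialPartition F}.ncard :=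
        Set.ncard_le_ncard_of_injOn (keySupport K '' ·)
          (fun _ hS' => hS'.isPartialPartition_image_keySupport hne)
          (fun _ h₁ _ h₂ h => (hinj.image_eq_image_iff h₁.1 h₂.1).1 h) (Set.toFinite _)
    _ ≤ Nat.card (Setoid (Option K)) := ncard_setOf_isPartialPartition_le
    _ ≤ bell (r + 1) := Setoid.card_le_card_of_embedding e

theorem stmt9 {d r : ℕ} (S : Set (Matrix (Fin d) (Fin d) ℂ))
    (hpp : ∀ M ∈ S, IsPartialPermMatrix M ∧ M ≠ 0)
    (hrank : Module.finrank ℂ ↥(Submodule.span ℂ S) = r)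
    (hocc : ∀ c : Fin d, ∃ M ∈ S, Occupies M c) :
    {S' : Set (Matrix (Fin d) (Fin d) ℂ) | IsCoveringSubset S S'}.ncard
      ≤ bell (r + 1) :=
  stmt9_general S hpp hrank
end

section
/- For every integer r ≥ 1, the Bell number B_r satisfies B_r < (0.792·r / ln(r+1))^r. -/
open Finset Real
open scoped Nat

namespace Setoid

variable {α β : Type*}

instance [Finite α] : Finite (Setoid α) :=
  Finite.of_injective (fun s : Setoid α => s.r) fun s t h => Setoid.ext fun x y => by
    simp only at h; rw [h]

def _root_.Equiv.setoidCongr (e : α ≃ β) : Setoid α ≃ Setoid β where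
  toFun s := s.comap e.symm
  invFun s := s.comap e
  left_inv s := by ext; simp [comap_rel]
  right_inv s := by ext; simp [comap_rel]

section Option

open scoped Classical

/-- The quotient map of the equivalence relation on `Option α` whose class of `none` is
`S ∪ {none}` and which is `t` off `S`. -/
noncomputable def optionGlue (S : Finset α) (t : Setoid {a // a ∉ S}) :
    Option α → Option (Quotient t)
  | none => none
  | some a => if h : a ∈ S then none else some ⟦⟨a, h⟩⟧

lemma sigma_compl_ext {S S' : Finset α} {t : Setoid {a // a ∉ S}} {t' : Setoid {a // a ∉ S'}}
    (h : S = S') (ht : ∀ a b (ha : a ∉ S) (hb : b ∉ S) (ha' : a ∉ S') (hb' : b ∉ S'),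
      t ⟨a, ha⟩ ⟨b, hb⟩ ↔ t' ⟨a, ha'⟩ ⟨b, hb'⟩) :
    (⟨S, t⟩ : Σ S : Finset α, Setoid {a // a ∉ S}) = ⟨S', t'⟩ := by
  subst h
  obtain rfl : t = t' := Setoid.ext fun ⟨a, ha⟩ ⟨b, hb⟩ => ht a b ha hb ha hb
  rfl

noncomputable def optionEquivSigma [Fintype α] :
    Setoid (Option α) ≃ Σ S : Finset α, Setoid {a // a ∉ S} where
  toFun s := ⟨univ.filter fun a => s (some a) none, s.comap (some ∘ Subtype.val)⟩
  invFun p := ker (optionGlue p.1 p.2)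
  left_inv s := by
    ext x y
    rcases x with _ | a <;> rcases y with _ | b <;>
      simp only [ker_def, optionGlue, mem_filter, mem_univ, true_and] <;> try split_ifs
    all_goals simp [Quotient.eq, comap_rel]
    all_goals grind [Setoid.symm', Setoid.trans']
  right_inv := fun ⟨S, t⟩ => sigma_compl_ext
    (by ext a; by_cases a ∈ S <;> simp [ker_def, optionGlue, *])
    fun a b _ _ ha hb => by simp [ker_def, optionGlue, ha, hb, Quotient.eq]

end Option

theorem card_subtype_card_quotient_eq_mul_factorial_le [Finite α] (k : ℕ) :
    Nat.card {σ : Setoid α // Nat.card (Quotient σ) = k} * k ! ≤ k ^ Nat.card α := by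
  let e (σ : {σ : Setoid α // Nat.card (Quotient σ) = k}) : Quotient σ.1 ≃ Fin k :=
    Finite.equivFinOfCardEq σ.2
  let Φ (p : {σ : Setoid α // Nat.card (Quotient σ) = k} × Equiv.Perm (Fin k)) : α → Fin k :=
    p.2 ∘ e p.1 ∘ Quotient.mk _
  have hker (p) : ker (Φ p) = p.1.1 := by
    ext x y
    simp [Φ, ker_def, Quotient.eq]
  have hΦ : Function.Injective Φ := by
    rintro ⟨σ, g⟩ ⟨σ', g'⟩ h
    obtain rfl : σ = σ' := Subtype.ext (by rw [← hker (σ, g), ← hker (σ', g'), h])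
    refine Prod.ext rfl (Equiv.ext fun j => ?_)
    obtain ⟨i, rfl⟩ := ((e σ).surjective.comp Quotient.mk_surjective) j
    exact congrFun h i
  simpa [Nat.card_perm, Fintype.card_perm, Nat.card_fun] using Nat.card_le_card_of_injective Φ hΦ

theorem card_eq_sum_card_subtype_card_quotient_eq [Finite α] :
    Nat.card (Setoid α) =
      ∑ k ∈ range (Nat.card α + 1), Nat.card {σ : Setoid α // Nat.card (Quotient σ) = k} := by
  classical
  have := Fintype.ofFinite (Setoid α)
  have hle (σ : Setoid α) : Nat.card (Quotient σ) < Nat.card α + 1 :=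
    Nat.lt_succ_of_le (Nat.card_le_card_of_surjective _ Quotient.mk_surjective)
  rw [Nat.card_eq_fintype_card, ← Finset.card_univ,
    card_eq_sum_card_fiberwise fun σ _ => mem_range.2 (hle σ)]
  simp [Nat.card_eq_fintype_card, Fintype.card_subtype]

theorem card_le_sum_pow_div_factorial [Finite α] :
    (Nat.card (Setoid α) : ℝ) ≤ ∑ k ∈ range (Nat.card α + 1), (k : ℝ) ^ Nat.card α / k ! := by
  rw [card_eq_sum_card_subtype_card_quotient_eq, Nat.cast_sum]
  refine sum_le_sum fun k _ => ?_
  rw [le_div_iff₀ (by positivity)]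
  exact_mod_cast card_subtype_card_quotient_eq_mul_factorial_le k

end Setoid

theorem Nat.card_setoid_fin (n : ℕ) : Nat.card (Setoid (Fin n)) = n.bell := by
  induction n using Nat.strong_induction_on with | _ n ih
  cases n with
  | zero =>
    rw [Nat.bell_zero, Nat.card_eq_one_iff_unique]
    exact ⟨⟨fun s t => Setoid.ext fun x => Fin.elim0 x⟩, ⟨⊥⟩⟩
  | succ n =>
    have hcompl (S : Finset (Fin n)) : Nat.card (Setoid {a // a ∉ S}) = (n - #S).bell := by
      rw [Nat.card_congr (Equiv.setoidCongr (Finite.equivFin _)), ih _ (by simp)]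
      simp
    calc Nat.card (Setoid (Fin (n + 1)))
        = Nat.card (Σ S : Finset (Fin n), Setoid {a // a ∉ S}) :=
          Nat.card_congr ((Equiv.setoidCongr (finSuccEquiv n)).trans Setoid.optionEquivSigma)
      _ = ∑ S : Finset (Fin n), (n - #S).bell := by rw [Nat.card_sigma]; simp only [hcompl]
      _ = ∑ i ≤ n, n.choose i * (n - i).bell := by
          rw [← powerset_univ, sum_powerset_apply_card (fun k => (n - k).bell), Finset.card_univ,
            Fintype.card_fin, Nat.range_succ_eq_Iic]
          rfl
      _ = (n + 1).bell := (Nat.bell_succ n).symm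

lemma le_div_exp_one_mul_exp_div {c : ℝ} (hc : 0 < c) (x : ℝ) : x ≤ c / exp 1 * exp (x / c) := by
  have h := add_one_le_exp (x / c - 1)
  rw [sub_add_cancel, exp_sub, le_div_iff₀ (exp_pos 1), div_mul_eq_mul_div, div_le_iff₀ hc] at h
  rw [div_mul_eq_mul_div, le_div_iff₀ (exp_pos 1)]
  linarith

lemma sum_range_pow_div_factorial_le {c : ℝ} (hc : 0 < c) (n m : ℕ) :
    ∑ k ∈ range m, (k : ℝ) ^ n / k ! ≤ (c / exp 1) ^ n * exp (exp (n / c)) := by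
  have hterm (k : ℕ) : (k : ℝ) ^ n ≤ (c / exp 1) ^ n * exp (n / c) ^ k := by
    calc (k : ℝ) ^ n ≤ (c / exp 1 * exp (k / c)) ^ n :=
          pow_le_pow_left₀ k.cast_nonneg (le_div_exp_one_mul_exp_div hc k) n
      _ = (c / exp 1) ^ n * exp (n / c) ^ k := by
          rw [mul_pow, ← exp_nat_mul, ← exp_nat_mul]; ring_nf
  calc ∑ k ∈ range m, (k : ℝ) ^ n / k !
      ≤ ∑ k ∈ range m, (c / exp 1) ^ n * (exp (n / c) ^ k / k !) := by
        gcongr with k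
        rw [mul_div_assoc']
        exact div_le_div_of_nonneg_right (hterm k) (by positivity)
    _ ≤ (c / exp 1) ^ n * exp (exp (n / c)) := by
        rw [← mul_sum]
        gcongr
        exact sum_le_exp_of_nonneg (exp_pos _).le m

lemma exp_five_sevenths_log_le {n : ℕ} (hn : 23 ≤ n) : exp (5 / 7 * log (n + 1)) ≤ 0.43 * n := by
  have hn' : (23 : ℝ) ≤ n := by exact_mod_cast hn
  have hpow : exp (5 / 7 * log (n + 1)) ^ 7 = ((n : ℝ) + 1) ^ 5 := by
    rw [← exp_nat_mul, ← exp_log (by positivity : (0 : ℝ) < n + 1), ← exp_nat_mul, log_exp]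
    ring_nf
  refine le_of_pow_le_pow_left₀ (n := 7) (by norm_num) (by positivity) ?_
  rw [hpow]
  calc ((n : ℝ) + 1) ^ 5 ≤ (24 / 23 * (n : ℝ)) ^ 5 := by gcongr; linarith
    _ ≤ (0.43 : ℝ) ^ 7 * 23 ^ 2 * (n : ℝ) ^ 5 := by rw [mul_pow]; gcongr; norm_num
    _ ≤ (0.43 : ℝ) ^ 7 * (n : ℝ) ^ 2 * (n : ℝ) ^ 5 := by gcongr
    _ = (0.43 * (n : ℝ)) ^ 7 := by ring

lemma seven_fifths_mul_exp_lt : 7 / 5 * exp 0.43 < 0.792 * exp 1 := by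
  have h := sum_le_exp_of_nonneg (x := 0.57) (by norm_num) 6
  norm_num [sum_range_succ, Nat.factorial] at h
  rw [show (1 : ℝ) = 0.43 + 0.57 by norm_num, exp_add]
  nlinarith [exp_pos 0.43]

lemma sum_range_pow_div_factorial_lt {n : ℕ} (hn : 23 ≤ n) :
    ∑ k ∈ range (n + 1), (k : ℝ) ^ n / k ! < (0.792 * n / log (n + 1)) ^ n := by
  have hn' : (0 : ℝ) < n := by positivity
  have hL : 0 < log ((n : ℝ) + 1) := log_pos (by linarith)
  set c := 7 / 5 * n / log ((n : ℝ) + 1) with hc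
  have hexp : exp (n / c) ≤ 0.43 * n := by
    rw [hc, show (n : ℝ) / (7 / 5 * n / log (n + 1)) = 5 / 7 * log (n + 1) by field_simp]
    exact exp_five_sevenths_log_le hn
  calc ∑ k ∈ range (n + 1), (k : ℝ) ^ n / k !
      ≤ (c / exp 1) ^ n * exp (exp (n / c)) := sum_range_pow_div_factorial_le (by positivity) n _
    _ ≤ (c / exp 1) ^ n * exp 0.43 ^ n := by
        rw [← exp_nat_mul]; gcongr; linarith
    _ = (c / exp 1 * exp 0.43) ^ n := (mul_pow ..).symm
    _ < (0.792 * n / log (n + 1)) ^ n := by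
        gcongr
        rw [hc, div_mul_eq_mul_div, div_lt_div_iff₀ (exp_pos 1) hL, div_mul_eq_mul_div,
          div_mul_eq_mul_div, div_lt_iff₀ hL]
        linarith [mul_lt_mul_of_pos_right seven_fifths_mul_exp_lt (mul_pos hn' hL)]

-- `27182818283 / 10 ^ 10 < e` (`Real.exp_one_gt_d9`), so `h` says `m ^ q < e ^ p`.
lemma log_natCast_lt_div {m p q : ℕ} (hm : 0 < m) (hq : 0 < q)
    (h : m ^ q * 10 ^ (10 * p) < 27182818283 ^ p) : log m < p / q := by
  have hmq : (m : ℝ) ^ q < exp p := by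
    calc (m : ℝ) ^ q < 2.7182818283 ^ p := by
          rw [show (2.7182818283 : ℝ) = 27182818283 / 10 ^ 10 by norm_num, div_pow,
            lt_div_iff₀ (by positivity), ← pow_mul]
          exact_mod_cast h
      _ ≤ exp p := by rw [← exp_one_pow]; gcongr; exact exp_one_gt_d9.le
  rw [lt_div_iff₀ (by positivity), mul_comm, ← log_pow, ← log_exp p]
  exact log_lt_log (by positivity) hmq

lemma Nat.bell_lt_of_log_lt {r : ℕ} (hr : 0 < r) {ρ : ℝ} (hlog : Real.log (r + 1) < ρ)
    (hB : r.bell * ρ ^ r ≤ (0.792 * r) ^ r) :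
    (r.bell : ℝ) < (0.792 * r / Real.log (r + 1)) ^ r := by
  have hL : 0 < Real.log ((r : ℝ) + 1) := Real.log_pos (by simpa using hr)
  have hρ : 0 < ρ := hL.trans hlog
  calc (r.bell : ℝ) ≤ (0.792 * r / ρ) ^ r := by rw [div_pow, le_div_iff₀ (by positivity)]; exact hB
    _ < (0.792 * r / Real.log (r + 1)) ^ r := by gcongr

lemma Nat.bell_lt_of_certificate {r p q : ℕ} (hr : 0 < r) (hq : 0 < q)
    (hlog : (r + 1) ^ q * 10 ^ (10 * p) < 27182818283 ^ p)
    (hB : r.bell * p ^ r * 1000 ^ r < (792 * r * q) ^ r) :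
    (r.bell : ℝ) < (0.792 * r / Real.log (r + 1)) ^ r := by
  refine Nat.bell_lt_of_log_lt hr (ρ := p / q)
    (by exact_mod_cast log_natCast_lt_div (by omega) hq hlog) ?_
  have hB' : (r.bell : ℝ) * p ^ r * 1000 ^ r < (792 * r * q) ^ r := by exact_mod_cast hB
  rw [div_pow, ← mul_div_assoc, div_le_iff₀ (by positivity)]
  refine le_of_lt (lt_of_mul_lt_mul_right ?_ (by positivity : (0 : ℝ) ≤ 1000 ^ r))
  rwa [← mul_pow, ← mul_pow, show 0.792 * (r : ℝ) * q * 1000 = 792 * r * q by ring]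

lemma Nat.bell_eq_of_recurrence {f : ℕ → ℕ} {N : ℕ} (h0 : f 0 = 1)
    (hsucc : ∀ n < N, f (n + 1) = ∑ i ≤ n, n.choose i * f (n - i)) : ∀ n ≤ N, n.bell = f n := by
  intro n
  induction n using Nat.strong_induction_on with | _ n ih
  cases n with
  | zero => simp [h0]
  | succ n =>
    intro hn
    rw [Nat.bell_succ, hsucc n (by omega)]
    exact sum_congr rfl fun i hi => by rw [ih _ (by omega) (by omega)]

def bellValues : List ℕ :=
  [1, 1, 2, 5, 15, 52, 203, 877, 4140, 21147, 115975, 678570, 4213597, 27644437, 190899322,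
    1382958545, 10480142147, 82864869804, 682076806159, 5832742205057, 51724158235372,
    474869816156751, 4506715738447323]

/-- Triples `(r, p, q)` with `log (r + 1) < p / q`. -/
def logCertificates : List (ℕ × ℕ × ℕ) :=
  [(1, 3, 4), (2, 10, 9), (3, 25, 18), (4, 66, 41), (5, 52, 29), (6, 37, 19), (7, 21, 10),
    (8, 11, 5), (9, 7, 3), (10, 12, 5), (11, 5, 2), (12, 13, 5), (13, 8, 3), (14, 11, 4),
    (15, 14, 5), (16, 17, 6), (17, 3, 1), (18, 3, 1), (19, 3, 1), (20, 13, 4), (21, 13, 4),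
    (22, 10, 3)]

lemma Nat.bell_eq_getD_bellValues : ∀ n ≤ 22, n.bell = bellValues.getD n 0 :=
  Nat.bell_eq_of_recurrence rfl (by decide +kernel)

lemma exists_logCertificate : ∀ r ≤ 22, 0 < r → ∃ c ∈ logCertificates, c.1 = r ∧ 0 < c.2.2 ∧
    (r + 1) ^ c.2.2 * 10 ^ (10 * c.2.1) < 27182818283 ^ c.2.1 ∧
    bellValues.getD r 0 * c.2.1 ^ r * 1000 ^ r < (792 * r * c.2.2) ^ r := by
  decide +kernel

theorem Nat.bell_lt_of_le_22 {r : ℕ} (hr0 : 0 < r) (hr : r ≤ 22) :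
    (r.bell : ℝ) < (0.792 * r / Real.log (r + 1)) ^ r := by
  obtain ⟨⟨_, p, q⟩, -, rfl, hq, hlog, hB⟩ := exists_logCertificate r hr hr0
  rw [← Nat.bell_eq_getD_bellValues _ hr] at hB
  exact Nat.bell_lt_of_certificate hr0 hq hlog hB

theorem stmt10 (r : ℕ) (hr : 1 ≤ r) :
    (bell r : ℝ) < (0.792 * r / Real.log (r + 1)) ^ r := by
  rcases le_or_gt r 22 with hsmall | hlarge
  · rw [bell, Nat.card_setoid_fin]
    exact Nat.bell_lt_of_le_22 hr hsmall
  · calc (bell r : ℝ) ≤ ∑ k ∈ range (r + 1), (k : ℝ) ^ r / k ! := by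
          simpa [bell] using Setoid.card_le_sum_pow_div_factorial (α := Fin r)
      _ < (0.792 * r / Real.log (r + 1)) ^ r := sum_range_pow_div_factorial_lt hlarge
end

section
/- Let U be a bipartite complex permutation matrix of Schmidt rank two on ℂ^{d_A} ⊗ ℂ^{d_B} that is block diagonal (each big row and big column has exactly one nonzero block, on the diagonal), with the first diagonal block equal to I_{d_B} and second diagonal block D₂ linearly independent of I_{d_B}. If some diagonal block of U is not proportional to I_{d_B} or D₂, then D₂ is diagonal with exactly two distinct diagonal entries. -/
/-- A complex permutation matrix: a unitary matrix with exactly one nonzero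
entry in each row and each column. -/
def IsComplexPermMatrix {ι : Type} [Fintype ι] [DecidableEq ι]
    (M : Matrix ι ι ℂ) : Prop :=
  M ∈ Matrix.unitaryGroup ι ℂ ∧ (∀ i, ∃! j, M i j ≠ 0) ∧ (∀ j, ∃! i, M i j ≠ 0)

/-- The `(j, k)` block (of size `dB × dB`) of a bipartite matrix on `ℂ^{dA} ⊗ ℂ^{dB}`. -/
def blk {dA dB : ℕ} (U : Matrix (Fin dA × Fin dB) (Fin dA × Fin dB) ℂ)
    (j k : Fin dA) : Matrix (Fin dB) (Fin dB) ℂ :=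
  fun b b' => U (j, b) (k, b')

/-- The Schmidt rank of a bipartite matrix: the dimension of the span of its blocks. -/
noncomputable def schmidtRank {dA dB : ℕ}
    (U : Matrix (Fin dA × Fin dB) (Fin dA × Fin dB) ℂ) : ℕ :=
  Module.finrank ℂ ↥(Submodule.span ℂ {M | ∃ j k, M = blk U j k})


/-!
Since the Schmidt rank is two and `1`, `D2` are independent blocks, every block lies in
`span {1, D2}`; the exceptional block is `M = α • 1 + β • D2` with `α, β ≠ 0`. Block
diagonality makes every diagonal block a monomial unitary. An off-diagonal entry of `D2` would
give a row of `M` with two nonzero entries, so `D2` is diagonal, and then so is `M`. Each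
diagonal entry `z` of `D2` has `|z| = 1` and `|α + β z| = 1`, which forces the quadratic
`ᾱ β z² + (|α|² + |β|² - 1) z + α β̄ = 0`: at most two values, and at least two since `D2` is
not scalar.
-/

theorem quadratic_eq_zero_of_mul_star_self_eq_one {α β z : ℂ} (hz : z * star z = 1)
    (hw : (α + β * z) * star (α + β * z) = 1) :
    star α * β * z ^ 2 + (α * star α + β * star β - 1) * z + α * star β = 0 := by
  rw [star_add, star_mul'] at hw
  linear_combination z * hw - (α * star β + β * star β * z) * hz

theorem eq_of_quadratic_eq_zero {K : Type*} [Field K] {a b c x y z : K} (ha : a ≠ 0)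
    (hx : a * x ^ 2 + b * x + c = 0) (hy : a * y ^ 2 + b * y + c = 0)
    (hz : a * z ^ 2 + b * z + c = 0) (hxy : x ≠ y) (hxz : x ≠ z) : y = z := by
  have hy' : a * (x + y) + b = 0 :=
    (mul_eq_zero.mp (by linear_combination hx - hy : (x - y) * (a * (x + y) + b) = 0)).resolve_left
      (sub_ne_zero.mpr hxy)
  have hz' : a * (x + z) + b = 0 :=
    (mul_eq_zero.mp (by linear_combination hx - hz : (x - z) * (a * (x + z) + b) = 0)).resolve_left
      (sub_ne_zero.mpr hxz)
  exact sub_eq_zero.mp <| (mul_eq_zero.mp (by linear_combination hy' - hz' :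
    a * (y - z) = 0)).resolve_left ha

namespace Matrix

variable {n : Type*} [DecidableEq n]

theorem IsDiag.exists_apply_ne {A : Matrix n n ℂ} (hd : A.IsDiag)
    (hA : ¬∃ c : ℂ, A = c • 1) : ∃ a b, A a a ≠ A b b := by
  by_contra! h
  rcases isEmpty_or_nonempty n with _ | ⟨⟨b₀⟩⟩
  · exact hA ⟨0, Subsingleton.elim _ _⟩
  · refine hA ⟨A b₀ b₀, ext fun a b => ?_⟩
    rcases eq_or_ne a b with rfl | hab
    · simp [h a b₀]
    · simp [hd hab, hab]

theorem isDiag_of_existsUnique_ne_zero {A : Matrix n n ℂ} {α β : ℂ} (hα : α ≠ 0) (hβ : β ≠ 0)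
    (hA : ∀ a, ∃! b, A a b ≠ 0) (hB : ∀ a, ∃! b, (α • 1 + β • A) a b ≠ 0) : A.IsDiag := by
  intro a b hab
  by_contra hAab
  have hAaa : A a a = 0 := by
    by_contra hAaa
    exact hab ((hA a).unique hAaa hAab)
  refine hab ((hB a).unique ?_ ?_) <;> simp [hab, hAaa, hα, hβ, hAab]

variable [Fintype n]

theorem IsDiag.apply_mul_star_self_of_mem_unitaryGroup {A : Matrix n n ℂ} (hd : A.IsDiag)
    (hA : A ∈ unitaryGroup n ℂ) (b : n) : A b b * star (A b b) = 1 := by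
  have h := congrFun (congrFun (mem_unitaryGroup_iff.mp hA) b) b
  rwa [mul_apply, Finset.sum_eq_single b (fun c _ hcb => by rw [hd (Ne.symm hcb), zero_mul])
    (by simp), one_apply_eq] at h

theorem ncard_diag_eq_two {D : Matrix n n ℂ} (hd : D.IsDiag) (hD : D ∈ unitaryGroup n ℂ)
    (hscalar : ¬∃ c : ℂ, D = c • 1) {α β : ℂ} (hα : α ≠ 0) (hβ : β ≠ 0)
    (hM : α • 1 + β • D ∈ unitaryGroup n ℂ) : {z : ℂ | ∃ b, D b b = z}.ncard = 2 := by
  have hMd : (α • 1 + β • D).IsDiag := (isDiag_one.smul α).add (hd.smul β)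
  have hroot (b : n) := quadratic_eq_zero_of_mul_star_self_eq_one
    (hd.apply_mul_star_self_of_mem_unitaryGroup hD b)
    (by simpa using hMd.apply_mul_star_self_of_mem_unitaryGroup hM b)
  have hlead : star α * β ≠ 0 := mul_ne_zero (star_ne_zero.mpr hα) hβ
  obtain ⟨a, b, hab⟩ := hd.exists_apply_ne hscalar
  refine Set.ncard_eq_two.mpr ⟨D a a, D b b, hab, Set.ext fun z => ⟨?_, ?_⟩⟩
  · rintro ⟨c, rfl⟩
    by_contra! hc
    simp only [Set.mem_insert_iff, Set.mem_singleton_iff, not_or] at hc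
    exact hab (eq_of_quadratic_eq_zero hlead (hroot c) (hroot a) (hroot b) hc.1 hc.2)
  · rintro (rfl | rfl)
    exacts [⟨a, rfl⟩, ⟨b, rfl⟩]

end Matrix

theorem Submodule.span_eq_span_pair_of_finrank_eq_two {K V : Type*} [Field K] [AddCommGroup V]
    [Module K V] {S : Set V} {v w : V} (hv : v ∈ S) (hw : w ∈ S)
    (hvw : LinearIndependent K ![v, w]) (hS : Module.finrank K (span K S) = 2) :
    span K S = span K {v, w} := by
  have hpair : Module.finrank K (span K {v, w}) = 2 := by
    rw [← Matrix.range_cons_cons_empty v w ![], finrank_span_eq_card hvw, Fintype.card_fin]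
  have : FiniteDimensional K (span K S) := Module.finite_of_finrank_eq_succ hS
  exact (eq_of_le_of_finrank_eq (span_mono (Set.insert_subset hv (Set.singleton_subset_iff.mpr hw)))
    (hpair.trans hS.symm)).symm

section Blocks

variable {dA dB : ℕ} {U : Matrix (Fin dA × Fin dB) (Fin dA × Fin dB) ℂ}

theorem blk_mem_unitaryGroup (hU : U ∈ Matrix.unitaryGroup _ ℂ)
    (hbd : ∀ j k : Fin dA, j ≠ k → blk U j k = 0) (k : Fin dA) :
    blk U k k ∈ Matrix.unitaryGroup (Fin dB) ℂ := by
  have hoff (k' : Fin dA) (hk' : k' ≠ k) (b b' : Fin dB) : U (k, b) (k', b') = 0 :=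
    congrFun (congrFun (hbd k k' hk'.symm) b) b'
  refine Matrix.mem_unitaryGroup_iff.mpr (Matrix.ext fun b b' => ?_)
  have h := congrFun (congrFun (Matrix.mem_unitaryGroup_iff.mp hU) (k, b)) (k, b')
  rw [Matrix.mul_apply, Fintype.sum_prod_type, Finset.sum_eq_single k
    (fun k' _ hk' => by simp [hoff k' hk']) (by simp)] at h
  simpa [Matrix.mul_apply, Matrix.one_apply, blk] using h

theorem blk_existsUnique_ne_zero (hU : ∀ i, ∃! j, U i j ≠ 0)
    (hbd : ∀ j k : Fin dA, j ≠ k → blk U j k = 0) (k : Fin dA) (b : Fin dB) :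
    ∃! b', blk U k k b b' ≠ 0 := by
  obtain ⟨⟨k', b'⟩, hne, huniq⟩ := hU (k, b)
  obtain rfl : k' = k := by
    by_contra hk
    exact hne (congrFun (congrFun (hbd k k' (Ne.symm hk)) b) b')
  exact ⟨b', hne, fun b'' hb'' => (Prod.ext_iff.mp (huniq (k', b'') hb'')).2⟩

end Blocks

theorem stmt14 {dA dB : ℕ} (hdA : 2 ≤ dA)
    (U : Matrix (Fin dA × Fin dB) (Fin dA × Fin dB) ℂ)
    (hU : IsComplexPermMatrix U)
    (hsr : schmidtRank U = 2)
    (hbd : ∀ j k : Fin dA, j ≠ k → blk U j k = 0)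
    (h0 : blk U ⟨0, by omega⟩ ⟨0, by omega⟩ = 1)
    (D2 : Matrix (Fin dB) (Fin dB) ℂ)
    (hD2 : D2 = blk U ⟨1, by omega⟩ ⟨1, by omega⟩)
    (hli : LinearIndependent ℂ ![(1 : Matrix (Fin dB) (Fin dB) ℂ), D2])
    (hexc : ∃ j : Fin dA, (¬∃ c : ℂ, blk U j j = c • (1 : Matrix (Fin dB) (Fin dB) ℂ)) ∧
      (¬∃ c : ℂ, blk U j j = c • D2)) :
    D2.IsDiag ∧ {z : ℂ | ∃ b, D2 b b = z}.ncard = 2 := by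
  obtain ⟨j, hj₁, hjD⟩ := hexc
  have hspan : Submodule.span ℂ {M | ∃ j k, M = blk U j k} = Submodule.span ℂ {1, D2} :=
    Submodule.span_eq_span_pair_of_finrank_eq_two ⟨_, _, h0.symm⟩ ⟨_, _, hD2⟩ hli hsr
  obtain ⟨α, β, hM⟩ := Submodule.mem_span_pair.mp (hspan ▸ Submodule.subset_span ⟨j, j, rfl⟩ :
    blk U j j ∈ Submodule.span ℂ {1, D2})
  have hα : α ≠ 0 := by
    rintro rfl
    exact hjD ⟨β, by simp [← hM]⟩
  have hβ : β ≠ 0 := by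
    rintro rfl
    exact hj₁ ⟨α, by simp [← hM]⟩
  have hrow := blk_existsUnique_ne_zero hU.2.1 hbd
  have hunit := blk_mem_unitaryGroup hU.1 hbd
  have hdiag : D2.IsDiag :=
    Matrix.isDiag_of_existsUnique_ne_zero hα hβ (hD2 ▸ hrow _) (hM ▸ hrow j)
  have hscalar : ¬∃ c : ℂ, D2 = c • 1 := fun ⟨c, hc⟩ => by
    simpa using LinearIndependent.pair_iff.mp hli c (-1) (by simp [hc])
  exact ⟨hdiag, Matrix.ncard_diag_eq_two hdiag (hD2 ▸ hunit _) hscalar hα hβ (hM ▸ hunit j)⟩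
end

section
/- Let U = D₁ ⊗ I + D₂ ⊗ (I_n ⊕ V₁) + D₃ ⊗ (V₃ ⊕ I_q) be a controlled permutation unitary where D₁, D₂, D₃ are rank-one orthogonal projectors onto computational basis states of ℂ³, V₁ is a q×q permutation matrix with no fixed points, and V₃ is an n×n permutation matrix with no fixed points (here I = I_{n+q}, and V₃ acts on the first n coordinates, V₁ on the last q). Then there is no vector |c⟩ ∈ ℂ^{n+q} such that the three vectors |c⟩, (I_n ⊕ V₁)|c⟩, and (V₃ ⊕ I_q)|c⟩ are nonzero and pairwise orthogonal. -/
/-!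
Write `c = b ⊕ d`. Then `⟨c, Ac⟩ = ⟨b, b⟩ + ⟨d, V₁ d⟩`, `⟨c, Bc⟩ = ⟨b, V₃ b⟩ + ⟨d, d⟩` and
`⟨Ac, Bc⟩ = ⟨b, V₃ b⟩ + ⟨V₁ d, d⟩`, so `conj ⟨c, Ac⟩ + ⟨c, Bc⟩ - ⟨Ac, Bc⟩ = ⟨c, c⟩`.
Orthogonality thus forces `⟨c, c⟩ = 0`.
-/

open Matrix

section

variable {R m o : Type*} [CommRing R] [Fintype m] [Fintype o]

theorem Matrix.fromBlocks_one_mulVec_sumElim [DecidableEq m] (V : Matrix o o R) (b : m → R)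
    (d : o → R) : fromBlocks 1 0 0 V *ᵥ Sum.elim b d = Sum.elim b (V *ᵥ d) := by
  simp [fromBlocks_mulVec, Function.comp_def]

theorem Matrix.fromBlocks_mulVec_one_sumElim [DecidableEq o] (W : Matrix m m R) (b : m → R)
    (d : o → R) : fromBlocks W 0 0 1 *ᵥ Sum.elim b d = Sum.elim (W *ᵥ b) d := by
  simp [fromBlocks_mulVec, Function.comp_def]

variable [StarRing R]

omit [Fintype m] [Fintype o] in
theorem Matrix.star_sumElim (u : m → R) (v : o → R) :
    star (Sum.elim u v) = Sum.elim (star u) (star v) := by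
  ext (i | i) <;> rfl

theorem Matrix.star_star_dotProduct_self (v : m → R) : star (star v ⬝ᵥ v) = star v ⬝ᵥ v := by
  rw [← star_dotProduct_star, star_star, dotProduct_comm]

theorem Matrix.star_dotProduct_fromBlocks_add_sub [DecidableEq m] [DecidableEq o]
    (V : Matrix o o R) (W : Matrix m m R) (c : m ⊕ o → R) :
    star (star c ⬝ᵥ fromBlocks 1 0 0 V *ᵥ c) + star c ⬝ᵥ fromBlocks W 0 0 1 *ᵥ c
      - star (fromBlocks 1 0 0 V *ᵥ c) ⬝ᵥ fromBlocks W 0 0 1 *ᵥ c = star c ⬝ᵥ c := by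
  rw [← Sum.elim_comp_inl_inr c]
  simp only [fromBlocks_one_mulVec_sumElim, fromBlocks_mulVec_one_sumElim, star_sumElim,
    sumElim_dotProduct_sumElim, star_add, star_star_dotProduct_self,
    star_dotProduct (V *ᵥ (c ∘ Sum.inr))]
  ring

end

theorem stmt18_general {n q : ℕ} (σ1 : Equiv.Perm (Fin q)) (σ3 : Equiv.Perm (Fin n))
    (A B : Matrix (Fin n ⊕ Fin q) (Fin n ⊕ Fin q) ℂ)
    (hA : A = Matrix.fromBlocks 1 0 0 (fun i j => if i = σ1 j then 1 else 0))
    (hB : B = Matrix.fromBlocks (fun i j => if i = σ3 j then 1 else 0) 0 0 1) :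
    ¬∃ c : Fin n ⊕ Fin q → ℂ,
      c ≠ 0 ∧ A.mulVec c ≠ 0 ∧ B.mulVec c ≠ 0 ∧
      (∑ i, (starRingEnd ℂ) (c i) * A.mulVec c i) = 0 ∧
      (∑ i, (starRingEnd ℂ) (c i) * B.mulVec c i) = 0 ∧
      (∑ i, (starRingEnd ℂ) (A.mulVec c i) * B.mulVec c i) = 0 := by
  rintro ⟨c, hc, -, -, hcA, hcB, hAB⟩
  change star c ⬝ᵥ A *ᵥ c = 0 at hcA
  change star c ⬝ᵥ B *ᵥ c = 0 at hcB
  change star (A *ᵥ c) ⬝ᵥ B *ᵥ c = 0 at hAB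
  have hcc := star_dotProduct_fromBlocks_add_sub (fun i j => if i = σ1 j then 1 else 0)
    (fun i j => if i = σ3 j then 1 else 0) c
  rw [← hA, ← hB, hcA, hcB, hAB, star_zero, add_zero, sub_zero] at hcc
  open scoped ComplexOrder in
  exact hc (dotProduct_star_self_eq_zero.mp hcc.symm)

theorem stmt18 {n q : ℕ} (σ1 : Equiv.Perm (Fin q)) (σ3 : Equiv.Perm (Fin n))
    (h1 : ∀ j, σ1 j ≠ j) (h3 : ∀ j, σ3 j ≠ j)
    (A B : Matrix (Fin n ⊕ Fin q) (Fin n ⊕ Fin q) ℂ)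
    (hA : A = Matrix.fromBlocks 1 0 0 (fun i j => if i = σ1 j then 1 else 0))
    (hB : B = Matrix.fromBlocks (fun i j => if i = σ3 j then 1 else 0) 0 0 1) :
    ¬∃ c : Fin n ⊕ Fin q → ℂ,
      c ≠ 0 ∧ A.mulVec c ≠ 0 ∧ B.mulVec c ≠ 0 ∧
      (∑ i, (starRingEnd ℂ) (c i) * A.mulVec c i) = 0 ∧
      (∑ i, (starRingEnd ℂ) (c i) * B.mulVec c i) = 0 ∧
      (∑ i, (starRingEnd ℂ) (A.mulVec c i) * B.mulVec c i) = 0 :=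
  stmt18_general σ1 σ3 A B hA hB
end
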